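/- Let f' : {0,1}^{2n-1} → {0,1} be monotone and let g : {0,1}^n → {0,1} be the minor of f' with respect to a random map π₂ : [2n-1] → [n] with π₂(1)=1 and the remaining 2n-2 elements partitioned uniformly at random into n-1 pairs P₂,…,P_n with π₂(j)=i for j ∈ P_i. Then for every j ∈ {0,1,…,n-1}, E_{π₂}[μ_g(j)] = μ'(2j), where μ_g(j) is the fraction of size-j subsets of [n]\{1} in B_g(1) and μ'(k) is the fraction of size-k subsets of [2n-1]\{1} in B_{f'}(1). -/

import Mathlib

open Finset

/-- A Boolean function on subsets of `Fin m` is monotone. -/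
def MonotoneB {m : ℕ} (f : Finset (Fin m) → Bool) : Prop :=
  ∀ S T : Finset (Fin m), S ⊆ T → f S = true → f T = true

/-- The boundary of coordinate `i`: sets `S` not containing `i` with
`f (S ∪ {i}) = 1` and `f S = 0`. -/
def boundary {m : ℕ} (f : Finset (Fin m) → Bool) (i : Fin m) : Finset (Finset (Fin m)) :=
  Finset.univ.filter (fun S => i ∉ S ∧ f (insert i S) = true ∧ f S = false)

/-- `mu f i j` : the fraction of size-`j` subsets of `[m] \ {i}` lying in the
boundary of coordinate `i`. -/
def mu {m : ℕ} (f : Finset (Fin m) → Bool) (i : Fin m) (j : ℕ) : ℚ :=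
  (((boundary f i).filter (fun S => S.card = j)).card : ℚ) / (((m - 1).choose j : ℕ) : ℚ)

/-- The Shapley value of coordinate `i` of `f` : the probability over a uniformly
random permutation `σ` that `i` is the pivotal coordinate on the increasing path
`∅ = P₀ ⊂ P₁ ⊂ ⋯ ⊂ Pₘ = univ` given by `σ`. -/
def shapley {m : ℕ} (f : Finset (Fin m) → Bool) (i : Fin m) : ℚ :=
  (((Finset.univ : Finset (Equiv.Perm (Fin m))).filter (fun σ =>
    ∃ j : Fin m, σ j = i ∧
      f ((Finset.univ.filter (fun k => k < j)).image (fun k => σ k)) = false ∧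
      f ((Finset.univ.filter (fun k => k ≤ j)).image (fun k => σ k)) = true)).card : ℚ)
    / ((Nat.factorial m : ℕ) : ℚ)

/-- `g` is the minor of `f` with respect to `π`. -/
def minorOf {m k : ℕ} (g : Finset (Fin k) → Bool) (f : Finset (Fin m) → Bool)
    (π : Fin m → Fin k) : Prop :=
  ∀ S : Finset (Fin k), g S = f (Finset.univ.filter (fun i => π i ∈ S))

/-- The minor of `f` with respect to `π`, as a function. -/
def minorFun {m k : ℕ} (f : Finset (Fin m) → Bool) (π : Fin m → Fin k) :
    Finset (Fin k) → Bool :=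
  fun S => f (Finset.univ.filter (fun i => π i ∈ S))

/-- The set of "pairing" maps `π₂ : [2n-1] → [n]` with `π₂(1) = 1` and the
remaining `2n-2` elements partitioned into `n-1` pairs. -/
def pairingMaps (n : ℕ) (hn : 0 < n) : Finset (Fin (2*n-1) → Fin n) :=
  Finset.univ.filter (fun π => π ⟨0, by omega⟩ = ⟨0, hn⟩ ∧
    ∀ i : Fin n, i.val ≠ 0 → (Finset.univ.filter (fun j => π j = i)).card = 2)

/-! For a fixed pairing `π`, `S ↦ π⁻¹(S)` identifies the boundary of coordinate `1` in the minor
with the boundary of `f'` intersected with the `π`-saturated sets, doubling sizes. Averaging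
over `π` is therefore the pushforward of the uniform distribution on pairs `(π, S)` with
`|S| = j` along `(π, S) ↦ π⁻¹(S)`. Permutations of `[2n-1]` fixing `1` act on the pairings and
carry any `2j`-subset of `[2n-1] \ {1}` to any other, so all fibers of this map have the same
size and the pushforward is uniform on those `2j`-subsets. -/

section Pullback

variable {α β : Type*} [Fintype α] [DecidableEq β]

def pullback (π : α → β) (S : Finset β) : Finset α :=
  univ.filter (fun a => π a ∈ S)

@[simp]
lemma mem_pullback {π : α → β} {S : Finset β} {a : α} : a ∈ pullback π S ↔ π a ∈ S := by
  simp [pullback]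

lemma pullback_insert {π : α → β} {b : β} {a₀ : α} [DecidableEq α]
    (h : ∀ a, π a = b ↔ a = a₀) (S : Finset β) :
    pullback π (insert b S) = insert a₀ (pullback π S) := by
  ext a
  simp [h]

lemma card_pullback {π : α → β} {S : Finset β} {d : ℕ}
    (h : ∀ b ∈ S, #(univ.filter (fun a => π a = b)) = d) : #(pullback π S) = d * #S := by
  rw [card_eq_sum_card_fiberwise (f := π) (t := S) (fun a ha => mem_pullback.mp ha),
    sum_congr rfl (fun b hb => ?_), sum_const, smul_eq_mul, mul_comm]
  rw [← h b hb]
  congr 1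
  ext a
  simp only [mem_filter, mem_pullback, mem_univ, true_and, and_iff_right_iff_imp]
  rintro rfl
  exact hb

lemma pullback_comp_symm (π : α → β) (σ : Equiv.Perm α) (S : Finset β) :
    pullback (π ∘ σ.symm) S = (pullback π S).map σ.toEmbedding := by
  ext a
  simp [mem_map_equiv]

end Pullback

lemma mem_boundary {m : ℕ} {f : Finset (Fin m) → Bool} {i : Fin m} {S : Finset (Fin m)} :
    S ∈ boundary f i ↔ i ∉ S ∧ f (insert i S) = true ∧ f S = false := by
  simp [boundary]

lemma filter_card_boundary_eq {m : ℕ} (f : Finset (Fin m) → Bool) (i : Fin m) (j : ℕ) :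
    (boundary f i).filter (fun S => S.card = j)
      = (powersetCard j (univ.erase i)).filter (· ∈ boundary f i) := by
  ext S
  simp only [mem_filter, mem_powersetCard, subset_erase, subset_univ, true_and, mem_boundary]
  tauto

lemma mem_boundary_minorFun_iff {m k : ℕ} {f : Finset (Fin m) → Bool} {π : Fin m → Fin k}
    {i₀ : Fin m} {i : Fin k} (h : ∀ a, π a = i ↔ a = i₀) {S : Finset (Fin k)} :
    S ∈ boundary (minorFun f π) i ↔ pullback π S ∈ boundary f i₀ := by
  have hi : π i₀ = i := (h i₀).mpr rfl
  rw [mem_boundary, mem_boundary]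
  change _ ∧ f (pullback π (insert i S)) = true ∧ f (pullback π S) = false ↔ _
  rw [pullback_insert h, mem_pullback, hi]

lemma Equiv.Perm.exists_fixing_map_finset_eq {α : Type*} [DecidableEq α] {z : α}
    {s t : Finset α} (hs : z ∉ s) (ht : z ∉ t) (h : #s = #t) :
    ∃ σ : Equiv.Perm α, σ z = z ∧ s.map σ.toEmbedding = t := by
  obtain ⟨σ, hσ⟩ := Equiv.Perm.exists_map_finset_eq s t h
  have hσ_mem : ∀ y, σ.symm y ∈ s ↔ y ∈ t := fun y => by rw [← hσ, mem_map_equiv]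
  have hσz : σ z ∉ t := by rwa [← hσ_mem, Equiv.symm_apply_apply]
  refine ⟨Equiv.swap (σ z) z * σ, by simp, ?_⟩
  ext x
  rw [mem_map_equiv, Equiv.Perm.mul_def, Equiv.symm_trans_apply, Equiv.symm_swap, hσ_mem,
    Equiv.swap_apply_def]
  split_ifs <;> simp_all

lemma card_filter_div_card_eq_of_card_fiber_eq {ι κ : Type*} [DecidableEq κ]
    {s : Finset ι} {t : Finset κ} {Φ : ι → κ} (hΦ : Set.MapsTo Φ s t)
    (hfib : ∀ y ∈ t, ∀ y' ∈ t, #{x ∈ s | Φ x = y} = #{x ∈ s | Φ x = y'})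
    (hs : s.Nonempty) (p : κ → Prop) [DecidablePred p] :
    (#{x ∈ s | p (Φ x)} : ℚ) / #s = #{y ∈ t | p y} / #t := by
  obtain ⟨x₀, hx₀⟩ := hs
  set c := #{x ∈ s | Φ x = Φ x₀}
  have hc : ∀ y ∈ t, #{x ∈ s | Φ x = y} = c := fun y hy => hfib y hy _ (hΦ hx₀)
  have hc_pos : 0 < c := card_pos.mpr ⟨x₀, mem_filter.mpr ⟨hx₀, rfl⟩⟩
  have hs_card : #s = #t * c := by
    rw [card_eq_sum_card_fiberwise hΦ, sum_congr rfl hc, sum_const, smul_eq_mul]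
  have hp_card : #{x ∈ s | p (Φ x)} = #{y ∈ t | p y} * c := by
    rw [card_eq_sum_card_fiberwise (f := Φ) (t := {y ∈ t | p y}), sum_const_nat]
    · intro y hy
      rw [mem_filter] at hy
      rw [filter_filter, ← hc y hy.1]
      congr 1
      exact filter_congr fun x _ => ⟨And.right, fun hx => ⟨hx ▸ hy.2, hx⟩⟩
    · intro x hx
      rw [coe_filter, Set.mem_ofPred_eq] at hx ⊢
      exact ⟨hΦ hx.1, hx.2⟩
  rw [hs_card, hp_card, Nat.cast_mul, Nat.cast_mul, mul_div_mul_right]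
  exact_mod_cast hc_pos.ne'

lemma card_filter_pullback_map_perm {α β : Type*} [Fintype α] [DecidableEq α] [DecidableEq β]
    {P : Finset (α → β)} (U : Finset (Finset β)) {σ : Equiv.Perm α}
    (hP : ∀ π, π ∘ σ.symm ∈ P ↔ π ∈ P) (T : Finset α) :
    #{x ∈ P ×ˢ U | pullback x.1 x.2 = T.map σ.toEmbedding}
      = #{x ∈ P ×ˢ U | pullback x.1 x.2 = T} := by
  symm
  refine card_equiv ((σ.arrowCongr (Equiv.refl β)).prodCongr (Equiv.refl _)) fun ⟨π, S⟩ => ?_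
  change _ ↔ (π ∘ σ.symm, S) ∈ _
  simp only [mem_filter, mem_product, hP, pullback_comp_symm, map_inj]

section Pairing

variable {n : ℕ} {hn : 0 < n} {π : Fin (2*n-1) → Fin n}

lemma mem_pairingMaps :
    π ∈ pairingMaps n hn ↔ π ⟨0, by omega⟩ = ⟨0, hn⟩ ∧
      ∀ i : Fin n, i.val ≠ 0 → #(univ.filter (fun a => π a = i)) = 2 := by
  simp [pairingMaps]

lemma card_fiber_zero_of_mem_pairingMaps (hπ : π ∈ pairingMaps n hn) :
    #(univ.filter (fun a => π a = ⟨0, hn⟩)) = 1 := by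
  have hpairs : ∑ b ∈ univ.erase ⟨0, hn⟩, #(univ.filter (fun a => π a = b)) = (n - 1) * 2 := by
    rw [sum_congr rfl fun b hb => (mem_pairingMaps.mp hπ).2 b ?_, sum_const, smul_eq_mul,
      card_erase_of_mem (mem_univ _), card_univ, Fintype.card_fin]
    exact fun h => ne_of_mem_erase hb (Fin.ext h)
  have htotal := card_eq_sum_card_fiberwise (f := π) (s := univ) (t := univ) fun a _ => mem_univ _
  rw [← add_sum_erase _ _ (mem_univ ⟨0, hn⟩), hpairs, card_univ, Fintype.card_fin] at htotal
  omega

lemma apply_eq_zero_iff_of_mem_pairingMaps (hπ : π ∈ pairingMaps n hn) (a : Fin (2*n-1)) :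
    π a = ⟨0, hn⟩ ↔ a = ⟨0, by omega⟩ := by
  obtain ⟨a₀, ha₀⟩ := card_eq_one.mp (card_fiber_zero_of_mem_pairingMaps hπ)
  have hfiber : ∀ a, π a = ⟨0, hn⟩ ↔ a = a₀ := fun a => by
    simpa using congrArg (a ∈ ·) ha₀
  rw [hfiber, ← (hfiber _).mp (mem_pairingMaps.mp hπ).1]

lemma comp_symm_mem_pairingMaps_iff {σ : Equiv.Perm (Fin (2*n-1))}
    (hσ : σ ⟨0, by omega⟩ = ⟨0, by omega⟩) :
    π ∘ σ.symm ∈ pairingMaps n hn ↔ π ∈ pairingMaps n hn := by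
  have hfiber : ∀ i, #(univ.filter (fun a => π (σ.symm a) = i))
      = #(univ.filter (fun a => π a = i)) := fun i => card_equiv σ.symm (by simp)
  have hσ_symm : σ.symm ⟨0, by omega⟩ = ⟨0, by omega⟩ := by rw [Equiv.symm_apply_eq, hσ]
  simp only [mem_pairingMaps, Function.comp_apply, hfiber, hσ_symm]

lemma pairingMaps_nonempty (n : ℕ) (hn : 0 < n) : (pairingMaps n hn).Nonempty := by
  refine ⟨fun a => ⟨(a.val + 1) / 2, by omega⟩,
    mem_pairingMaps.mpr ⟨Fin.ext (by norm_num), fun i hi => ?_⟩⟩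
  have hpair : univ.filter (fun a : Fin (2*n-1) => (⟨(a.val + 1) / 2, by omega⟩ : Fin n) = i)
      = {⟨2 * i.val - 1, by omega⟩, ⟨2 * i.val, by omega⟩} := by
    ext a
    simp only [mem_filter, mem_univ, true_and, mem_insert, mem_singleton, Fin.ext_iff]
    omega
  rw [hpair, card_pair (by simp [Fin.ext_iff]; omega)]

lemma pullback_mem_powersetCard (hπ : π ∈ pairingMaps n hn) {j : ℕ} {S : Finset (Fin n)}
    (hS : S ∈ powersetCard j (univ.erase ⟨0, hn⟩)) :
    pullback π S ∈ powersetCard (2*j) (univ.erase ⟨0, by omega⟩) := by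
  rw [mem_powersetCard, subset_erase] at hS ⊢
  refine ⟨⟨subset_univ _, ?_⟩, ?_⟩
  · rw [mem_pullback, (mem_pairingMaps.mp hπ).1]
    exact hS.1.2
  · rw [card_pullback (d := 2), hS.2]
    intro b hb
    refine (mem_pairingMaps.mp hπ).2 b fun hb₀ => hS.1.2 ?_
    rwa [← show b = ⟨0, hn⟩ from Fin.ext hb₀]

lemma card_filter_boundary_minorFun_eq (hπ : π ∈ pairingMaps n hn)
    (f : Finset (Fin (2*n-1)) → Bool) (j : ℕ) :
    #((boundary (minorFun f π) ⟨0, hn⟩).filter (·.card = j))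
      = #{S ∈ powersetCard j (univ.erase ⟨0, hn⟩) | pullback π S ∈ boundary f ⟨0, by omega⟩} := by
  simp only [filter_card_boundary_eq,
    mem_boundary_minorFun_iff (apply_eq_zero_iff_of_mem_pairingMaps hπ)]

lemma card_filter_pullback_eq_of_card_eq (U : Finset (Finset (Fin n)))
    {T T' : Finset (Fin (2*n-1))} (hT : ⟨0, by omega⟩ ∉ T) (hT' : ⟨0, by omega⟩ ∉ T')
    (hcard : #T = #T') :
    #{x ∈ pairingMaps n hn ×ˢ U | pullback x.1 x.2 = T}
      = #{x ∈ pairingMaps n hn ×ˢ U | pullback x.1 x.2 = T'} := by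
  obtain ⟨σ, hσ, rfl⟩ := Equiv.Perm.exists_fixing_map_finset_eq hT hT' hcard
  exact (card_filter_pullback_map_perm U (fun _ => comp_symm_mem_pairingMaps_iff hσ) T).symm

end Pairing

/-- Under a uniformly random pairing minor, the expected boundary fraction of
coordinate 1 satisfies `E_{π₂}[μ_g(j)] = μ'(2j)` for all `0 ≤ j ≤ n-1`. -/
theorem expected_mu_random_pairing (n : ℕ) (hn : 0 < n)
    (f' : Finset (Fin (2*n-1)) → Bool)
    (j : ℕ) (hj : j < n) :
    (∑ π ∈ pairingMaps n hn, mu (minorFun f' π) ⟨0, hn⟩ j) /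
        (((pairingMaps n hn).card : ℕ) : ℚ) =
      mu f' ⟨0, by omega⟩ (2*j) := by
  set P := pairingMaps n hn
  set Sⱼ := powersetCard j (univ.erase (⟨0, hn⟩ : Fin n))
  set T₂ⱼ := powersetCard (2*j) (univ.erase (⟨0, by omega⟩ : Fin (2*n-1)))
  have hmaps : Set.MapsTo (fun x : (Fin (2*n-1) → Fin n) × Finset (Fin n) => pullback x.1 x.2)
      (P ×ˢ Sⱼ : Finset _) T₂ⱼ := fun x hx =>
    pullback_mem_powersetCard (mem_product.mp hx).1 (mem_product.mp hx).2
  have hfiber : ∀ T ∈ T₂ⱼ, ∀ T' ∈ T₂ⱼ, #{x ∈ P ×ˢ Sⱼ | pullback x.1 x.2 = T}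
      = #{x ∈ P ×ˢ Sⱼ | pullback x.1 x.2 = T'} := fun T hT T' hT' => by
    rw [mem_powersetCard, subset_erase] at hT hT'
    exact card_filter_pullback_eq_of_card_eq Sⱼ hT.1.2 hT'.1.2 (hT.2.trans hT'.2.symm)
  have hne : (P ×ˢ Sⱼ).Nonempty :=
    (pairingMaps_nonempty n hn).product (powersetCard_nonempty.mpr (by simp; omega))
  have hcount : ∑ π ∈ P, #((boundary (minorFun f' π) ⟨0, hn⟩).filter (·.card = j))
      = #{x ∈ P ×ˢ Sⱼ | pullback x.1 x.2 ∈ boundary f' ⟨0, by omega⟩} := by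
    rw [sum_congr rfl fun π hπ => card_filter_boundary_minorFun_eq hπ f' j]
    simp only [card_filter, sum_product, P, Sⱼ]
  calc (∑ π ∈ P, mu (minorFun f' π) ⟨0, hn⟩ j) / (#P : ℚ)
      = (#{x ∈ P ×ˢ Sⱼ | pullback x.1 x.2 ∈ boundary f' ⟨0, by omega⟩} : ℚ) / #(P ×ˢ Sⱼ) := by
        rw [← hcount, card_product, show #Sⱼ = (n - 1).choose j by simp [Sⱼ]]
        simp only [mu, ← sum_div, div_div]
        push_cast
        ring
    _ = (#{T ∈ T₂ⱼ | T ∈ boundary f' ⟨0, by omega⟩} : ℚ) / #T₂ⱼ :=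
        card_filter_div_card_eq_of_card_fiber_eq hmaps hfiber hne (· ∈ boundary f' ⟨0, by omega⟩)
    _ = mu f' ⟨0, by omega⟩ (2*j) := by
        rw [mu, filter_card_boundary_eq, show #T₂ⱼ = (2*n-1-1).choose (2*j) by simp [T₂ⱼ]]
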